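/- arXiv:1501.05998 — 3 statements merged into one kernel-verified Lean document; each statement's English description precedes it below -/
import Mathlib

section
/- Let b ≥ 2 and N ≥ 1 be integers and let n be a non-negative integer with n < b^N. Then for all real x and y: ∏_{j=1}^{b-1} binom(x+y+j-1, j)^{μ_j(n)} = ∑_{0 ≤ m ⪯ n} [ ∏_{j=1}^{b-1} binom(x+j-1, j)^{μ_j(m)} · ∏_{j=1}^{b-1} binom(y+j-1, j)^{μ_j(n-m)} ], where the sum is over all m with m ⪯ n in base b. -/
/-- The generalized binomial coefficient `binom(x,k) = x(x-1)⋯(x-k+1)/k!`. -/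
noncomputable def binom (x : ℝ) (k : ℕ) : ℝ :=
  (∏ i ∈ Finset.range k, (x - i)) / (Nat.factorial k)

/-- `dig b n i` is the `i`-th digit of `n` in base `b`. -/
def dig (b n i : ℕ) : ℕ := n / b ^ i % b

/-- `mult b j n` is the multiplicity `μ_j(n)` of the digit `j` in the base-`b` expansion of `n`. -/
def mult (b j n : ℕ) : ℕ := (Nat.digits b n).count j

/-!
The rising binomial `binom (x + j - 1) j` is `Ring.multichoose x j`, and since
`choose (-x) j = (-1)^j multichoose x j`, Chu–Vandermonde turns into the convolution
`multichoose (x + y) d = ∑_{e + f = d} multichoose x e * multichoose y f`.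
Because a digit `0` contributes the factor `multichoose x 0 = 1`, the product over multiplicities
is just the product of `multichoose x` over the digits of `n`. If `m ⪯ n` then `n - m` is
subtracted digitwise without borrows, so writing `n = d + b q` with `d < b`, the sum over
`m ⪯ n` splits as a sum over the last digit `e ≤ d` times a sum over `m' ⪯ q`, and the theorem
follows by induction on `n` from the one-digit convolution.
-/

open Finset Polynomial

theorem Ring.add_multichoose_eq {R : Type*} [Ring R] [BinomialRing R] {r s : R} (k : ℕ)
    (h : Commute r s) :
    multichoose (r + s) k = ∑ ij ∈ antidiagonal k, multichoose r ij.1 * multichoose s ij.2 := by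
  have hneg := add_choose_eq k h.neg_left.neg_right
  rw [← neg_add, choose_neg'] at hneg
  refine MulAction.injective (Int.negOnePow k) ?_
  simp only [hneg, smul_sum]
  refine sum_congr rfl fun ij hij => ?_
  rw [choose_neg', choose_neg', smul_mul_smul_comm, ← Int.negOnePow_add, ← Nat.cast_add,
    mem_antidiagonal.mp hij]

theorem binom_eq_choose (x : ℝ) (k : ℕ) : binom x k = Ring.choose x k := by
  rw [Ring.choose_eq_smul, ← aeval_eq_smeval, aeval_def, eval₂_eq_eval_map, descPochhammer_map,
    descPochhammer_eval_eq_prod_range, binom, smul_eq_mul, inv_mul_eq_div]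

theorem binom_add_sub_one_eq_multichoose (x : ℝ) (k : ℕ) :
    binom (x + k - 1) k = Ring.multichoose x k := by
  rw [binom_eq_choose, Ring.multichoose_eq]

def digitProd {M : Type*} [CommMonoid M] (f : ℕ → M) (b n : ℕ) : M :=
  ((Nat.digits b n).map f).prod

section digitProd

variable {M : Type*} [CommMonoid M] {f : ℕ → M} {b : ℕ}

@[simp]
theorem digitProd_zero : digitProd f b 0 = 1 := by
  simp [digitProd]

theorem digitProd_add_mul (hb : 1 < b) (hf : f 0 = 1) {d : ℕ} (hd : d < b) (q : ℕ) :
    digitProd f b (d + b * q) = f d * digitProd f b q := by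
  by_cases hdq : d ≠ 0 ∨ q ≠ 0
  · rw [digitProd, digitProd, Nat.digits_add b hb d q hd hdq, List.map_cons, List.prod_cons]
  · obtain ⟨rfl, rfl⟩ : d = 0 ∧ q = 0 := by tauto
    simp [hf]

theorem prod_pow_mult_eq_digitProd (hb : 1 < b) (hf : f 0 = 1) (n : ℕ) :
    ∏ j ∈ Icc 1 (b - 1), f j ^ mult b j n = digitProd f b n := by
  classical
  have hdigits : (Nat.digits b n).toFinset ⊆ range b := fun d hd =>
    mem_range.mpr (Nat.digits_lt_base hb (List.mem_toFinset.mp hd))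
  have hIcc : insert 0 (Icc 1 (b - 1)) = range b := by
    ext j
    simp only [mem_insert, mem_Icc, mem_range]
    omega
  unfold mult digitProd
  rw [prod_list_map_count, prod_subset hdigits fun j _ hj => by
    rw [List.count_eq_zero_of_not_mem (fun h => hj (List.mem_toFinset.mpr h)), pow_zero],
    ← hIcc, prod_insert (by simp), hf, one_pow, one_mul]

end digitProd

theorem dig_zero (b n : ℕ) : dig b n 0 = n % b := by
  simp [dig]

theorem dig_succ (b n i : ℕ) : dig b n (i + 1) = dig b (n / b) i := by
  simp [dig, pow_succ', Nat.div_div_eq_div_mul]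

theorem forall_dig_le_iff {b m n : ℕ} :
    (∀ i, dig b m i ≤ dig b n i) ↔ m % b ≤ n % b ∧ ∀ i, dig b (m / b) i ≤ dig b (n / b) i := by
  rw [← Nat.and_forall_add_one]
  simp only [dig_zero, dig_succ]

theorem le_of_forall_dig_le {b : ℕ} (hb : 1 < b) {m n : ℕ} (h : ∀ i, dig b m i ≤ dig b n i) :
    m ≤ n := by
  induction m using Nat.strong_induction_on generalizing n with
  | _ m ih =>
    rcases Nat.eq_zero_or_pos m with rfl | hm
    · exact Nat.zero_le n
    obtain ⟨hmod, hdiv⟩ := forall_dig_le_iff.mp h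
    have := ih (m / b) (Nat.div_lt_self hm hb) hdiv
    rw [← Nat.mod_add_div m b, ← Nat.mod_add_div n b]
    gcongr

open Classical in
noncomputable def dominatedBy (b n : ℕ) : Finset ℕ :=
  (range (n + 1)).filter fun m => ∀ i, dig b m i ≤ dig b n i

theorem mem_dominatedBy {b n m : ℕ} (hb : 1 < b) :
    m ∈ dominatedBy b n ↔ ∀ i, dig b m i ≤ dig b n i := by
  simp only [dominatedBy, mem_filter, mem_range, and_iff_right_iff_imp]
  exact fun h => Nat.lt_succ_of_le (le_of_forall_dig_le hb h)

@[simp]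
theorem dominatedBy_zero (b : ℕ) : dominatedBy b 0 = {0} := by
  simp [dominatedBy]

theorem dominatedBy_add_mul {b d : ℕ} (hb : 1 < b) (hd : d < b) (q : ℕ) :
    dominatedBy b (d + b * q) =
      (range (d + 1) ×ˢ dominatedBy b q).image fun p => p.1 + b * p.2 := by
  have hb0 : 0 < b := by omega
  ext m
  simp only [mem_dominatedBy hb, mem_image, mem_product, mem_range, Prod.exists,
    forall_dig_le_iff (m := m), Nat.add_mul_mod_self_left, Nat.add_mul_div_left _ _ hb0,
    Nat.mod_eq_of_lt hd, Nat.div_eq_of_lt hd, zero_add]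
  constructor
  · rintro ⟨hmod, hdiv⟩
    exact ⟨m % b, m / b, ⟨by omega, hdiv⟩, Nat.mod_add_div m b⟩
  · rintro ⟨e, m', ⟨he, hm'⟩, rfl⟩
    have heb : e < b := by omega
    simp only [Nat.add_mul_mod_self_left, Nat.add_mul_div_left _ _ hb0, Nat.mod_eq_of_lt heb,
      Nat.div_eq_of_lt heb, zero_add]
    exact ⟨by omega, hm'⟩

theorem sum_dominatedBy_add_mul {M : Type*} [AddCommMonoid M] {b d : ℕ} (hb : 1 < b)
    (hd : d < b) (q : ℕ) (F : ℕ → M) :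
    ∑ m ∈ dominatedBy b (d + b * q), F m =
      ∑ e ∈ range (d + 1), ∑ m ∈ dominatedBy b q, F (e + b * m) := by
  have hb0 : 0 < b := by omega
  rw [dominatedBy_add_mul hb hd, sum_image, sum_product]
  rintro ⟨e, m⟩ hem ⟨e', m'⟩ hem' heq
  simp only [coe_product, coe_range, Set.mem_prod, Set.mem_Iio] at hem hem' heq
  have he : e < b := by omega
  have he' : e' < b := by omega
  have hmod := congrArg (· % b) heq
  have hdiv := congrArg (· / b) heq
  simp only [Nat.add_mul_mod_self_left, Nat.mod_eq_of_lt he, Nat.mod_eq_of_lt he',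
    Nat.add_mul_div_left _ _ hb0, Nat.div_eq_of_lt he, Nat.div_eq_of_lt he', zero_add] at hmod hdiv
  rw [hmod, hdiv]

theorem digitProd_eq_sum_dominatedBy {R : Type*} [CommSemiring R] {b : ℕ} (hb : 1 < b)
    {φ ψ χ : ℕ → R} (hφ : φ 0 = 1) (hψ : ψ 0 = 1)
    (hχ : ∀ d < b, χ d = ∑ ij ∈ antidiagonal d, φ ij.1 * ψ ij.2) (n : ℕ) :
    digitProd χ b n = ∑ m ∈ dominatedBy b n, digitProd φ b m * digitProd ψ b (n - m) := by
  induction n using Nat.strong_induction_on with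
  | _ n ih =>
    rcases Nat.eq_zero_or_pos n with rfl | hn
    · simp
    set d := n % b
    set q := n / b
    have hd : d < b := Nat.mod_lt n (by omega)
    have hq : q < n := Nat.div_lt_self hn hb
    have hχ0 : χ 0 = 1 := by simpa [hφ, hψ] using hχ 0 (by omega)
    rw [← Nat.mod_add_div n b, digitProd_add_mul hb hχ0 hd, hχ d hd,
      Nat.sum_antidiagonal_eq_sum_range_succ_mk, ih q hq, sum_mul_sum,
      sum_dominatedBy_add_mul hb hd]
    refine sum_congr rfl fun e he => sum_congr rfl fun m hm => ?_
    have he : e ≤ d := Nat.lt_succ_iff.mp (mem_range.mp he)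
    have hm : m ≤ q := le_of_forall_dig_le hb ((mem_dominatedBy hb).mp hm)
    have hsub : d + b * q - (e + b * m) = (d - e) + b * (q - m) := by
      have := Nat.mul_le_mul_left b hm
      rw [Nat.mul_sub]
      omega
    rw [hsub, digitProd_add_mul hb hφ (by omega), digitProd_add_mul hb hψ (by omega)]
    ring

open Classical in
theorem digital_binomial_theorem_multiplicities_general (b : ℕ) (hb : 2 ≤ b)
    (n : ℕ) (x y : ℝ) :
    ∏ j ∈ Finset.Icc 1 (b - 1), binom (x + y + j - 1) j ^ mult b j n =
      ∑ m ∈ (Finset.range (n + 1)).filter (fun m => ∀ i, dig b m i ≤ dig b n i),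
        (∏ j ∈ Finset.Icc 1 (b - 1), binom (x + j - 1) j ^ mult b j m) *
          ∏ j ∈ Finset.Icc 1 (b - 1), binom (y + j - 1) j ^ mult b j (n - m) := by
  simp only [binom_add_sub_one_eq_multichoose,
    prod_pow_mult_eq_digitProd hb (Ring.multichoose_zero_right _)]
  exact digitProd_eq_sum_dominatedBy hb (Ring.multichoose_zero_right x)
    (Ring.multichoose_zero_right y) (fun d _ => Ring.add_multichoose_eq d (Commute.all x y)) n

open Classical in
/-- For `b ≥ 2`, `N ≥ 1`, `n < b^N` and all real `x, y`:
`∏_{j=1}^{b-1} binom(x+y+j-1, j)^{μ_j(n)} = ∑_{0 ≤ m ⪯ n} ∏_{j=1}^{b-1} binom(x+j-1, j)^{μ_j(m)}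
· ∏_{j=1}^{b-1} binom(y+j-1, j)^{μ_j(n-m)}`, the sum over all `m` digitally dominated by `n`
in base `b`. -/
theorem digital_binomial_theorem_multiplicities (b N : ℕ) (hb : 2 ≤ b) (hN : 1 ≤ N)
    (n : ℕ) (hn : n < b ^ N) (x y : ℝ) :
    ∏ j ∈ Finset.Icc 1 (b - 1), binom (x + y + j - 1) j ^ mult b j n =
      ∑ m ∈ (Finset.range (n + 1)).filter (fun m => ∀ i, dig b m i ≤ dig b n i),
        (∏ j ∈ Finset.Icc 1 (b - 1), binom (x + j - 1) j ^ mult b j m) *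
          ∏ j ∈ Finset.Icc 1 (b - 1), binom (y + j - 1) j ^ mult b j (n - m) :=
  digital_binomial_theorem_multiplicities_general b hb n x y
end

section
/- Let b ≥ 2 be an integer and x a real number. Let X_{b,1}(x) be the b×b real matrix whose (j,k)-entry is x/(j-k) if j ≥ k+1 and 0 otherwise. Then the matrix exponential satisfies exp(X_{b,1}(x)) = S_{b,1}(x). -/
/-- The generalized Sierpinski matrix `S_{b,1}(x)`, with `(j,k)`-entry
`binom(x+j-k-1, j-k)` for `k ≤ j` and `0` otherwise. -/
noncomputable def S1 (b : ℕ) (x : ℝ) : Matrix (Fin b) (Fin b) ℝ :=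
  Matrix.of fun j k =>
    if (k : ℕ) ≤ (j : ℕ) then binom (x + ((j : ℕ) - (k : ℕ)) - 1) ((j : ℕ) - (k : ℕ)) else 0

/-- The matrix `X_{b,1}(x)`, with `(j,k)`-entry `x/(j-k)` if `j ≥ k+1` and `0` otherwise. -/
noncomputable def X1 (b : ℕ) (x : ℝ) : Matrix (Fin b) (Fin b) ℝ :=
  Matrix.of fun j k =>
    if (k : ℕ) + 1 ≤ (j : ℕ) then x / (((j : ℕ) - (k : ℕ) : ℕ) : ℝ) else 0

/-!
Sending a power series to the lower triangular Toeplitz matrix of its first `b` coefficients is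
an algebra map `ℝ⟦t⟧ → Mat_b(ℝ)`, and `X_{b,1}(x)` is the image of `x·ℓ`, where
`ℓ = ∑ tⁿ/n = -log(1 - t)`. Since `ℓ` has no constant term, the image is nilpotent, so its
exponential is the image of the truncated exponential `∑_{i<b} (xℓ)ⁱ/i!`. Below degree `N` the
truncated exponential `∑_{i<N} (xℓ)ⁱ/i!` satisfies `(1 - t) g' = x g` (because `ℓ' = 1/(1 - t)`),
i.e. `(n + 1) gₙ₊₁ = (x + n) gₙ`, the recursion of `binom(x + n - 1, n)`, the coefficients of
`(1 - t)^(-x)`.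
-/

open Finset PowerSeries
open scoped Nat

namespace PowerSeries

section CommSemiring

variable {R : Type*} [CommSemiring R] {b : ℕ}

theorem sum_lowerToeplitz_mul_lowerToeplitz (f g : R⟦X⟧) {j k : Fin b} (hkj : (k : ℕ) ≤ j) :
    ∑ l : Fin b, (if (l : ℕ) ≤ j then coeff (j - l) f else 0) *
      (if (k : ℕ) ≤ l then coeff (l - k) g else 0) = coeff (j - k) (f * g) := by
  set F : ℕ → R := fun l => (if l ≤ j then coeff (j - l) f else 0) *
    (if (k : ℕ) ≤ l then coeff (l - k) g else 0)
  have hsupp : ∀ l ∈ range b, l ∉ Ico (k : ℕ) (j + 1) → F l = 0 := by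
    intro l _ hl
    rw [mem_Ico, not_and_or, not_le, not_lt] at hl
    rcases hl with hl | hl
    · simp [F, not_le.mpr hl]
    · simp [F, show ¬ l ≤ j by omega]
  rw [Fin.sum_univ_eq_sum_range F, ← sum_subset (fun l hl => by simp at hl ⊢; omega) hsupp,
    sum_Ico_eq_sum_range, mul_comm, coeff_mul,
    Nat.sum_antidiagonal_eq_sum_range_succ (fun p q => coeff p g * coeff q f),
    show (j : ℕ) + 1 - (k : ℕ) = ((j : ℕ) - (k : ℕ)).succ by omega]
  refine sum_congr rfl fun p hp => ?_
  rw [mem_range] at hp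
  simp only [F, if_pos (show (k : ℕ) + p ≤ j by omega), if_pos (Nat.le_add_right _ _),
    Nat.add_sub_cancel_left, mul_comm, Nat.sub_add_eq]

variable (R b) in
noncomputable def lowerToeplitz : R⟦X⟧ →ₐ[R] Matrix (Fin b) (Fin b) R where
  toFun f := Matrix.of fun j k => if (k : ℕ) ≤ j then coeff (j - k) f else 0
  map_one' := by
    ext j k
    simp only [coeff_one, Matrix.of_apply, Matrix.one_apply, Fin.ext_iff]
    split_ifs <;> first | rfl | omega
  map_mul' f g := by
    ext j k
    rw [Matrix.mul_apply]
    simp only [Matrix.of_apply]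
    split_ifs with hkj
    · exact (sum_lowerToeplitz_mul_lowerToeplitz f g hkj).symm
    · refine (sum_eq_zero fun l _ => ?_).symm
      split_ifs <;> first | simp | omega
  map_zero' := by ext; simp
  map_add' f g := by
    ext
    simp only [map_add, Matrix.of_apply, Matrix.add_apply]
    split_ifs <;> simp
  commutes' r := by
    ext j k
    simp only [algebraMap_apply, Algebra.algebraMap_self, RingHom.id_apply, coeff_C,
      Matrix.of_apply, Matrix.algebraMap_matrix_apply, Fin.ext_iff]
    split_ifs <;> first | rfl | omega

theorem lowerToeplitz_apply (f : R⟦X⟧) (j k : Fin b) :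
    lowerToeplitz R b f j k = if (k : ℕ) ≤ j then coeff (j - k) f else 0 := rfl

theorem coeff_pow_eq_zero_of_lt {f : R⟦X⟧} (hf : constantCoeff f = 0) {n i : ℕ} (h : n < i) :
    coeff n (f ^ i) = 0 :=
  X_pow_dvd_iff.mp (pow_dvd_pow_of_dvd (X_dvd_iff.mpr hf) i) n h

theorem lowerToeplitz_pow_eq_zero {f : R⟦X⟧} (hf : constantCoeff f = 0) :
    lowerToeplitz R b f ^ b = 0 := by
  ext j k
  rw [← map_pow, lowerToeplitz_apply]
  split_ifs
  · exact coeff_pow_eq_zero_of_lt hf (by omega)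
  · rfl

theorem coeff_X_mul_derivative (f : R⟦X⟧) (n : ℕ) :
    coeff n (X * d⁄dX R f) = n * coeff n f := by
  cases n with
  | zero => simp
  | succ n => rw [coeff_succ_X_mul, coeff_derivative, mul_comm]; push_cast; rfl

end CommSemiring

section Field

variable {K : Type*} [Field K]

noncomputable def truncExp (N : ℕ) (f : K⟦X⟧) : K⟦X⟧ :=
  ∑ i ∈ range N, (i ! : K)⁻¹ • f ^ i

theorem constantCoeff_truncExp {N : ℕ} (hN : 0 < N) {f : K⟦X⟧} (hf : constantCoeff f = 0) :
    constantCoeff (truncExp N f) = 1 := by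
  obtain ⟨N, rfl⟩ := Nat.exists_eq_add_of_lt hN
  simp [truncExp, sum_range_succ', hf]

variable [CharZero K]

theorem derivative_truncExp_succ (N : ℕ) (f : K⟦X⟧) :
    d⁄dX K (truncExp (N + 1) f) = truncExp N f * d⁄dX K f := by
  rw [truncExp, truncExp, map_sum, sum_range_succ', sum_mul]
  simp only [Derivation.map_smul, pow_zero, Derivation.map_one_eq_zero, smul_zero, add_zero,
    Derivation.leibniz_pow, Nat.add_sub_cancel, smul_mul_assoc]
  refine sum_congr rfl fun i _ => ?_
  have hfac : ((i + 1)! : K)⁻¹ * (i + 1 : ℕ) = (i ! : K)⁻¹ := by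
    rw [Nat.factorial_succ, Nat.cast_mul, mul_inv, mul_right_comm,
      inv_mul_cancel₀ (Nat.cast_ne_zero.mpr i.succ_ne_zero), one_mul]
  rw [smul_eq_mul (f ^ i), ← Nat.cast_smul_eq_nsmul K, smul_smul, hfac]

/-- The series `∑ Xⁿ / n = -log (1 - X)`; its constant term is the junk value `0⁻¹ = 0`. -/
noncomputable def negLogOneSub : K⟦X⟧ :=
  mk fun n => (n : K)⁻¹

@[simp]
theorem constantCoeff_negLogOneSub : constantCoeff (negLogOneSub : K⟦X⟧) = 0 := by
  simp [negLogOneSub, ← coeff_zero_eq_constantCoeff_apply]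

theorem derivative_negLogOneSub : d⁄dX K (negLogOneSub : K⟦X⟧) = mk 1 := by
  ext n
  rw [coeff_derivative, negLogOneSub, coeff_mk, coeff_mk]
  push_cast
  exact inv_mul_cancel₀ n.cast_add_one_ne_zero

theorem one_sub_X_mul_derivative_truncExp_smul_negLogOneSub (N : ℕ) (x : K) :
    (1 - X) * d⁄dX K (truncExp (N + 1) (x • negLogOneSub)) =
      x • truncExp N (x • negLogOneSub) := by
  rw [derivative_truncExp_succ, Derivation.map_smul, derivative_negLogOneSub, mul_smul_comm,
    mul_comm, smul_mul_assoc, mul_assoc, mk_one_mul_one_sub_eq_one, mul_one]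

end Field

end PowerSeries

theorem NormedSpace.exp_eq_sum_range_of_pow_eq_zero (𝕂 : Type*) {𝔸 : Type*} [Field 𝕂]
    [CharZero 𝕂] [Ring 𝔸] [Algebra 𝕂 𝔸] [TopologicalSpace 𝔸] [IsTopologicalRing 𝔸] {a : 𝔸}
    {N : ℕ} (h : a ^ N = 0) : NormedSpace.exp a = ∑ i ∈ range N, (i ! : 𝕂)⁻¹ • a ^ i := by
  rw [NormedSpace.exp_eq_tsum 𝕂]
  exact tsum_eq_sum fun i hi => by
    rw [pow_eq_zero_of_le (not_lt.mp (mt mem_range.mpr hi)) h, smul_zero]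

theorem binom_succ (x : ℝ) (n : ℕ) :
    (n + 1) * binom (x + (n + 1 : ℕ) - 1) (n + 1) = (x + n) * binom (x + n - 1) n := by
  have hprod : ∏ i ∈ range (n + 1), (x + (n + 1 : ℕ) - 1 - i)
      = (∏ i ∈ range n, (x + n - 1 - i)) * (x + n) := by
    rw [prod_range_succ']
    push_cast
    congr 1
    · exact prod_congr rfl fun i _ => by ring
    · ring
  rw [binom, binom, hprod, Nat.factorial_succ, Nat.cast_mul]
  have : (n ! : ℝ) ≠ 0 := by positivity
  field_simp
  push_cast
  ring

theorem coeff_truncExp_smul_negLogOneSub (x : ℝ) {n N : ℕ} (h : n < N) :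
    coeff n (truncExp N (x • negLogOneSub)) = binom (x + n - 1) n := by
  induction n generalizing N with
  | zero =>
    rw [coeff_zero_eq_constantCoeff_apply, constantCoeff_truncExp h (by simp)]
    simp [binom]
  | succ n ih =>
    obtain ⟨M, rfl⟩ : ∃ M, N = M + 1 := ⟨N - 1, by omega⟩
    have hode := congrArg (coeff n) (one_sub_X_mul_derivative_truncExp_smul_negLogOneSub M x)
    rw [sub_mul, one_mul, map_sub, coeff_X_mul_derivative, coeff_derivative, coeff_smul,
      ih (by omega), ih (by omega), smul_eq_mul] at hode
    refine mul_left_cancel₀ (n.cast_add_one_ne_zero : (n + 1 : ℝ) ≠ 0) ?_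
    rw [binom_succ]
    linarith

theorem X1_eq_lowerToeplitz (b : ℕ) (x : ℝ) :
    X1 b x = lowerToeplitz ℝ b (x • negLogOneSub) := by
  ext j k
  rw [lowerToeplitz_apply, X1, Matrix.of_apply, coeff_smul, negLogOneSub, coeff_mk, smul_eq_mul]
  split_ifs with h₁ h₂ h₂
  · rw [div_eq_mul_inv]
  · omega
  · rw [show (j : ℕ) = k by omega, Nat.sub_self, Nat.cast_zero, inv_zero, mul_zero]
  · rfl

theorem exp_X1_eq_S1_general (b : ℕ) (x : ℝ) :
    NormedSpace.exp (X1 b x) = S1 b x := by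
  have hf : constantCoeff (x • negLogOneSub : ℝ⟦X⟧) = 0 := by simp
  rw [X1_eq_lowerToeplitz, NormedSpace.exp_eq_sum_range_of_pow_eq_zero ℝ
    (lowerToeplitz_pow_eq_zero hf)]
  simp only [← map_pow, ← map_smul, ← map_sum]
  ext j k
  rw [← truncExp, lowerToeplitz_apply, S1, Matrix.of_apply]
  split_ifs with hkj
  · rw [coeff_truncExp_smul_negLogOneSub x (by omega), Nat.cast_sub hkj]
  · rfl

/-- The matrix exponential of `X_{b,1}(x)` is `S_{b,1}(x)`. -/
theorem exp_X1_eq_S1 (b : ℕ) (hb : 2 ≤ b) (x : ℝ) :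
    NormedSpace.exp (X1 b x) = S1 b x :=
  exp_X1_eq_S1_general b x
end

section
/- Let b ≥ 2 and N ≥ 1 be integers, let A = (a_0, …, a_{b-1}) be a zero-sum vector of complex numbers, and let c = (c_0, …, c_{b^N-1}) be any vector of complex numbers with associated polynomial P(x) = ∑_{n=0}^{b^N-1} c_n x^n. Then the polynomial identity ∑_{n=0}^{b^N-1} a_{u_b(n)} x^n = P(x) · ∏_{m=0}^{N-1} (1 - x^{b^m}) holds if and only if both: (i) the vector a_N with entries a_{u_b(n)}, 0 ≤ n ≤ b^N-1, satisfies a_N = M_N c, and (ii) c_n = 0 for every n, 0 ≤ n ≤ b^N-1, whose base-b expansion contains the digit b-1. -/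
/-- `ptm b n` is the generalized Prouhet–Thue–Morse sequence `u_b(n)`: the sum of the base-`b`
digits of `n`, reduced modulo `b`. -/
def ptm (b n : ℕ) : ℕ := (Nat.digits b n).sum % b

/-- The matrix `M_1`: the `b×b` lower-bidiagonal matrix with `1`'s on the diagonal and `-1`'s on
the subdiagonal. -/
def M1 (b : ℕ) : Matrix (Fin b) (Fin b) ℂ :=
  Matrix.of fun j k =>
    if (j : ℕ) = (k : ℕ) then 1 else if (j : ℕ) = (k : ℕ) + 1 then -1 else 0

/-- The equivalence `Fin b × Fin (b^N) ≃ Fin (b^(N+1))`, `(p, r) ↦ p·b^N + r`, used to index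
Kronecker products. -/
def pke (b N : ℕ) : Fin b × Fin (b ^ N) ≃ Fin (b ^ (N + 1)) :=
  finProdFinEquiv.trans (finCongr (by ring))

open Kronecker in
/-- The matrices `M_N`, defined recursively by `M_{N+1} = M_1 ⊗ M_N` (Kronecker product). -/
def Mmat (b : ℕ) : (N : ℕ) → Matrix (Fin (b ^ N)) (Fin (b ^ N)) ℂ
  | 0 => 1
  | N + 1 => Matrix.reindex (pke b N) (pke b N) (M1 b ⊗ₖ Mmat b N)

/-!
Write `Y = X ^ b ^ N` and split an index `n < b ^ (N + 1)` as `n = p * b ^ N + r` with top digit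
`p` (this is `pke`). Multiplying `∑ p, Y ^ p * P p` by `1 - Y` gives
`∑ p, Y ^ p * (P p - P (p - 1))` plus the overflow term `Y ^ b * P (b - 1)`; the first part is
exactly the action of `M_1` on the top digit. Hence, by induction on `N`, `M_N c` is the
coefficient vector of `P_c * ∏ m < N, (1 - X ^ b ^ m)` as soon as `c` vanishes at every index
having a digit `b - 1`: no carries occur. This is the implication from right to left.

Conversely, for zero-sum `a` such a `c` with `M_N c = (a_{u_b(n)})_n` is built recursively: over
each top digit `p` take the partial sum, up to `p`, of the solutions for the cyclic shifts of `a`.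
The full partial sum (top digit `b - 1`) vanishes, since the shifts of `a` add up to zero and `M_N`
is injective on vectors vanishing at the digit `b - 1`. Cancelling the nonzero product then
identifies any `c` satisfying the polynomial identity with this one.
-/

open Polynomial Matrix Finset
open scoped Kronecker

variable {b N : ℕ}

lemma pke_apply_val (p : Fin b) (r : Fin (b ^ N)) : (pke b N (p, r) : ℕ) = p * b ^ N + r := by
  simp [pke, finProdFinEquiv]; ring

lemma dig_eq_zero_of_lt_pow {n i : ℕ} (h : n < b ^ i) : dig b n i = 0 := by
  simp [dig, Nat.div_eq_of_lt h]

lemma dig_mul_pow_add_of_lt (p r : ℕ) {i : ℕ} (hi : i < N) :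
    dig b (p * b ^ N + r) i = dig b r i := by
  obtain ⟨k, rfl⟩ := Nat.exists_eq_add_of_lt hi
  rcases Nat.eq_zero_or_pos b with rfl | hb
  · simp [dig]
  rw [dig, dig, add_comm, show p * b ^ (i + k + 1) = (p * b ^ k * b) * b ^ i by ring,
    Nat.add_mul_div_right _ _ (pow_pos hb i), Nat.add_mul_mod_self_right]

lemma dig_pke_of_lt (p : Fin b) (r : Fin (b ^ N)) {i : ℕ} (hi : i < N) :
    dig b (pke b N (p, r)) i = dig b r i := by
  rw [pke_apply_val, dig_mul_pow_add_of_lt _ _ hi]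

lemma dig_pke_self (p : Fin b) (r : Fin (b ^ N)) : dig b (pke b N (p, r)) N = p := by
  rw [dig, pke_apply_val, add_comm, Nat.add_mul_div_right _ _ (pow_pos p.pos N),
    Nat.div_eq_of_lt r.isLt, zero_add, Nat.mod_eq_of_lt p.isLt]

lemma exists_dig_pke_iff (p : Fin b) (r : Fin (b ^ N)) :
    (∃ i, dig b (pke b N (p, r)) i = b - 1) ↔
      (p : ℕ) = b - 1 ∨ ∃ i, dig b r i = b - 1 := by
  have hb := p.pos
  constructor
  · rintro ⟨i, hi⟩
    rcases lt_trichotomy i N with h | rfl | h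
    · exact .inr ⟨i, by rwa [← dig_pke_of_lt p r h]⟩
    · exact .inl (by rwa [← dig_pke_self p r])
    · rw [dig_eq_zero_of_lt_pow ((pke b N (p, r)).isLt.trans_le
        (Nat.pow_le_pow_right hb h))] at hi
      exact .inl (by have := p.isLt; omega)
  · rintro (hp | ⟨i, hi⟩)
    · exact ⟨N, by rw [dig_pke_self, hp]⟩
    · rcases lt_or_ge i N with h | h
      · exact ⟨i, by rwa [dig_pke_of_lt p r h]⟩
      · rw [dig_eq_zero_of_lt_pow (r.isLt.trans_le (Nat.pow_le_pow_right hb h))] at hi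
        exact ⟨N, by rw [dig_pke_self]; have := p.isLt; omega⟩

lemma digits_sum_add_pow_mul (hb : 1 < b) {r : ℕ} (hr : r < b ^ N) (p : ℕ) :
    (Nat.digits b (r + b ^ N * p)).sum = (Nat.digits b r).sum + (Nat.digits b p).sum := by
  rcases Nat.eq_zero_or_pos p with rfl | hp
  · simp
  have hlen := (Nat.digits_length_le_iff hb r).2 hr
  rw [← Nat.add_sub_cancel' hlen, ← Nat.digits_append_zeroes_append_digits hb hp]
  simp

lemma ptm_pke (hb : 1 < b) (p : Fin b) (r : Fin (b ^ N)) :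
    ptm b (pke b N (p, r)) = (p + ptm b r) % b := by
  have hdp : (Nat.digits b p).sum = p := by
    rcases Nat.eq_zero_or_pos (p : ℕ) with hp | hp
    · simp [hp]
    · simp [Nat.digits_of_lt b p hp.ne' p.isLt]
  rw [ptm, ptm, pke_apply_val, add_comm, mul_comm, digits_sum_add_pow_mul hb r.isLt, hdp,
    Nat.add_mod_mod, add_comm]

def VanishesOnMaxDigit {R : Type*} [Zero R] (b : ℕ) {N : ℕ} (c : Fin (b ^ N) → R) : Prop :=
  ∀ n : Fin (b ^ N), (∃ i, dig b n i = b - 1) → c n = 0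

lemma ofFn_eq_sum_C_mul_X_pow {n : ℕ} (c : Fin n → ℂ) :
    ofFn n c = ∑ k : Fin n, C (c k) * X ^ (k : ℕ) := by
  simp only [ofFn_eq_sum_monomial, C_mul_X_pow_eq_monomial]

lemma ofFn_pke (c : Fin (b ^ (N + 1)) → ℂ) :
    ofFn _ c = ∑ p : Fin b, (X ^ b ^ N) ^ (p : ℕ) * ofFn _ (fun r => c (pke b N (p, r))) := by
  simp only [ofFn_eq_sum_C_mul_X_pow, mul_sum]
  rw [← (pke b N).sum_comp, Fintype.sum_prod_type]
  refine sum_congr rfl fun p _ => sum_congr rfl fun r _ => ?_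
  rw [pke_apply_val]
  ring

lemma reindex_kronecker_mulVec_pke {R : Type*} [CommSemiring R] (A : Matrix (Fin b) (Fin b) R)
    (B : Matrix (Fin (b ^ N)) (Fin (b ^ N)) R) (c : Fin (b ^ (N + 1)) → R)
    (p : Fin b) (r : Fin (b ^ N)) :
    (reindex (pke b N) (pke b N) (A ⊗ₖ B) *ᵥ c) (pke b N (p, r)) =
      ∑ q, A p q * (B *ᵥ fun s => c (pke b N (q, s))) r := by
  rw [reindex_apply, submatrix_mulVec_equiv]
  simp only [Function.comp_apply, Equiv.symm_apply_apply, Equiv.symm_symm, mulVec, dotProduct,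
    Fintype.sum_prod_type, kroneckerMap_apply, mul_sum, mul_assoc]

lemma ofFn_reindex_kronecker_mulVec (A : Matrix (Fin b) (Fin b) ℂ)
    (B : Matrix (Fin (b ^ N)) (Fin (b ^ N)) ℂ) (c : Fin (b ^ (N + 1)) → ℂ) :
    ofFn _ (reindex (pke b N) (pke b N) (A ⊗ₖ B) *ᵥ c) =
      ∑ q, (∑ p : Fin b, C (A p q) * (X ^ b ^ N) ^ (p : ℕ)) *
        ofFn _ (B *ᵥ fun s => c (pke b N (q, s))) := by
  have hrow : ∀ p, (fun r => (reindex (pke b N) (pke b N) (A ⊗ₖ B) *ᵥ c) (pke b N (p, r))) =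
      ∑ q, A p q • (B *ᵥ fun s => c (pke b N (q, s))) := fun p => by
    ext r
    simp only [reindex_kronecker_mulVec_pke, Finset.sum_apply, Pi.smul_apply, smul_eq_mul]
  simp only [ofFn_pke, hrow, map_sum, map_smul, smul_eq_C_mul, mul_sum, sum_mul]
  rw [sum_comm]
  exact sum_congr rfl fun _ _ => sum_congr rfl fun _ _ => by ring

lemma sum_C_M1_mul_pow {q : Fin b} (hq : (q : ℕ) + 1 < b) (Y : ℂ[X]) :
    ∑ p : Fin b, C (M1 b p q) * Y ^ (p : ℕ) = Y ^ (q : ℕ) * (1 - Y) := by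
  have hne : q ≠ ⟨q + 1, hq⟩ := by simp [Fin.ext_iff]
  rw [Fintype.sum_eq_add q ⟨q + 1, hq⟩ hne]
  · simp [M1, pow_succ]
    ring
  · rintro p ⟨h1, h2⟩
    rw [M1, of_apply, if_neg (Fin.val_ne_of_ne h1), if_neg fun h => h2 (Fin.ext h), map_zero,
      zero_mul]

lemma M1_mul_sum_range (p : Fin b) (v : ℕ → ℂ) :
    ∑ q : Fin b, M1 b p q * ∑ j ∈ range (q + 1), v j = v p := by
  rcases Nat.eq_zero_or_pos (p : ℕ) with hp | hp
  · rw [Fintype.sum_eq_single p fun q hq => ?_]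
    · simp [M1, hp]
    · rw [M1, of_apply, if_neg (Fin.val_ne_of_ne hq.symm), if_neg (by omega), zero_mul]
  have hne : p ≠ ⟨p - 1, by omega⟩ := by simp [Fin.ext_iff]; omega
  rw [Fintype.sum_eq_add p ⟨p - 1, by omega⟩ hne fun q hq => ?_]
  · simp only [M1, of_apply, if_true, if_neg (show (p : ℕ) ≠ p - 1 by omega),
      Nat.sub_add_cancel hp, sum_range_succ]
    ring
  · rw [M1, of_apply, if_neg (Fin.val_ne_of_ne hq.1.symm),
      if_neg fun h => hq.2 (Fin.ext (by simp only; omega)), zero_mul]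

lemma VanishesOnMaxDigit.comp_pke {R : Type*} [Zero R] {c : Fin (b ^ (N + 1)) → R}
    (hc : VanishesOnMaxDigit b c) (p : Fin b) : VanishesOnMaxDigit b fun r => c (pke b N (p, r)) :=
  fun r hr => hc _ ((exists_dig_pke_iff p r).2 (.inr hr))

lemma VanishesOnMaxDigit.apply_pke_of_eq {R : Type*} [Zero R] {c : Fin (b ^ (N + 1)) → R}
    (hc : VanishesOnMaxDigit b c) {p : Fin b} (hp : (p : ℕ) = b - 1) (r : Fin (b ^ N)) :
    c (pke b N (p, r)) = 0 :=
  hc _ ((exists_dig_pke_iff p r).2 (.inl hp))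

theorem ofFn_Mmat_mulVec {c : Fin (b ^ N) → ℂ} (hc : VanishesOnMaxDigit b c) :
    ofFn _ (Mmat b N *ᵥ c) = ofFn _ c * ∏ m ∈ range N, (1 - X ^ b ^ m) := by
  induction N with
  | zero => rw [Mmat, one_mulVec, prod_range_zero, mul_one]
  | succ N ih =>
    set Q : ℂ[X] := ∏ m ∈ range N, (1 - X ^ b ^ m)
    set Y : ℂ[X] := X ^ b ^ N
    have hcol : ∀ q : Fin b, (∑ p : Fin b, C (M1 b p q) * Y ^ (p : ℕ)) *
        ofFn _ (Mmat b N *ᵥ fun r => c (pke b N (q, r))) =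
          Y ^ (q : ℕ) * ofFn _ (fun r => c (pke b N (q, r))) * (Q * (1 - Y)) := fun q => by
      by_cases hq : (q : ℕ) + 1 < b
      · rw [sum_C_M1_mul_pow hq, ih (hc.comp_pke q)]
        ring
      · have hzero : (fun r => c (pke b N (q, r))) = 0 :=
          funext (hc.apply_pke_of_eq (by omega))
        simp [hzero]
    rw [Mmat, ofFn_reindex_kronecker_mulVec, prod_range_succ, ofFn_pke, sum_mul]
    exact sum_congr rfl fun q _ => hcol q

lemma prod_one_sub_X_pow_pow_ne_zero (hb : 0 < b) (N : ℕ) :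
    ∏ m ∈ range N, (1 - (X : ℂ[X]) ^ b ^ m) ≠ 0 :=
  prod_ne_zero_iff.2 fun m _ => by
    rw [← neg_sub, neg_ne_zero, ← C_1]
    exact X_pow_sub_C_ne_zero (pow_pos hb m) 1

lemma VanishesOnMaxDigit.eq_zero_of_Mmat_mulVec_eq_zero (hb : 0 < b) {c : Fin (b ^ N) → ℂ}
    (hc : VanishesOnMaxDigit b c) (h : Mmat b N *ᵥ c = 0) : c = 0 := by
  have := ofFn_Mmat_mulVec hc
  rw [h, map_zero, eq_comm, mul_eq_zero_iff_right (prod_one_sub_X_pow_pow_ne_zero hb N)] at this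
  exact injective_ofFn _ (this.trans (map_zero _).symm)

def cycShift {α : Type*} (a : Fin b → α) (j : ℕ) : Fin b → α :=
  fun i => a ⟨(j + i) % b, Nat.mod_lt _ i.pos⟩

lemma sum_cycShift {α : Type*} [AddCommMonoid α] (a : Fin b → α) (j : ℕ) :
    ∑ i, cycShift a j i = ∑ i, a i := by
  rcases Nat.eq_zero_or_pos b with rfl | hb
  · simp
  have : NeZero b := ⟨hb.ne'⟩
  exact Fintype.sum_equiv (Equiv.addLeft (Fin.ofNat b j)) _ _ fun i => by
    simp only [cycShift, Equiv.coe_addLeft]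
    congr 1
    ext
    simp [Fin.val_add]

lemma sum_range_cycShift {α : Type*} [AddCommMonoid α] (a : Fin b → α) (i : Fin b) :
    ∑ j ∈ range b, cycShift a j i = ∑ i, a i := by
  have : NeZero b := ⟨i.pos.ne'⟩
  rw [← Fin.sum_univ_eq_sum_range (fun j => cycShift a j i)]
  exact Fintype.sum_equiv (Equiv.addRight i) _ _ fun _ => rfl

def ptmVec {α : Type*} (hb : 0 < b) (a : Fin b → α) (N : ℕ) : Fin (b ^ N) → α :=
  fun n => a ⟨ptm b n, Nat.mod_lt _ hb⟩

lemma ptmVec_pke {α : Type*} (hb : 1 < b) (a : Fin b → α) (p : Fin b) (r : Fin (b ^ N)) :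
    ptmVec (Nat.zero_lt_of_lt hb) a (N + 1) (pke b N (p, r)) =
      ptmVec (Nat.zero_lt_of_lt hb) (cycShift a p) N r := by
  simp only [ptmVec, cycShift, ptm_pke hb]

theorem exists_vanishesOnMaxDigit_Mmat_mulVec_eq_ptmVec (hb : 1 < b) (N : ℕ) (a : Fin b → ℂ)
    (ha : ∑ i, a i = 0) :
    ∃ c : Fin (b ^ N) → ℂ, VanishesOnMaxDigit b c ∧
      Mmat b N *ᵥ c = ptmVec (Nat.zero_lt_of_lt hb) a N := by
  induction N generalizing a with
  | zero =>
    refine ⟨ptmVec _ a 0, fun n ⟨i, hi⟩ => ?_, by rw [Mmat, one_mulVec]⟩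
    rw [dig_eq_zero_of_lt_pow (n.isLt.trans_le (Nat.one_le_pow _ _ (by omega)))] at hi
    omega
  | succ N ih =>
    choose d hd hMd using fun j : ℕ => ih (cycShift a j) (by rw [sum_cycShift, ha])
    have hsum : ∑ j ∈ range b, d j = 0 := by
      refine VanishesOnMaxDigit.eq_zero_of_Mmat_mulVec_eq_zero (by omega)
        (fun n hn => by simp [Finset.sum_apply, hd _ n hn]) ?_
      ext r
      simp [mulVec_sum, hMd, ptmVec, sum_range_cycShift, ha]
    refine ⟨fun n => ∑ j ∈ range (((pke b N).symm n).1 + 1), d j ((pke b N).symm n).2,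
      ?_, ?_⟩
    · intro n hn
      obtain ⟨⟨p, r⟩, rfl⟩ := (pke b N).surjective n
      simp only [Equiv.symm_apply_apply]
      rcases (exists_dig_pke_iff p r).1 hn with hp | hr
      · rw [show (p : ℕ) + 1 = b by omega, ← Finset.sum_apply, hsum, Pi.zero_apply]
      · exact sum_eq_zero fun j _ => hd j r hr
    · ext n
      obtain ⟨⟨p, r⟩, rfl⟩ := (pke b N).surjective n
      have hcol : ∀ q : ℕ, (Mmat b N *ᵥ fun s => ∑ j ∈ range (q + 1), d j s) r =
          ∑ j ∈ range (q + 1), ptmVec (Nat.zero_lt_of_lt hb) (cycShift a j) N r := fun q => by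
        simp only [← Finset.sum_fn, mulVec_sum, hMd, Finset.sum_apply]
      rw [Mmat, reindex_kronecker_mulVec_pke]
      simp only [Equiv.symm_apply_apply, hcol]
      rw [M1_mul_sum_range, ptmVec_pke hb]

/-- For `b ≥ 2`, `N ≥ 1`, a zero-sum vector `A = (a_0, …, a_{b-1})` of complex numbers and any
vector `c = (c_0, …, c_{b^N-1})` of complex numbers with associated polynomial
`P(x) = ∑_{n<b^N} c_n x^n`, the polynomial identity
`∑_{n<b^N} a_{u_b(n)} x^n = P(x) · ∏_{m<N} (1 - x^{b^m})` holds if and only if both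
`(a_{u_b(n)})_n = M_N c` and `c_n = 0` for every `n` whose base-`b` expansion contains the
digit `b-1`. -/
theorem ptm_matrix_equation (b N : ℕ) (hb : 2 ≤ b)
    (a : Fin b → ℂ) (ha : ∑ i, a i = 0) (c : Fin (b ^ N) → ℂ) :
    ((∑ n : Fin (b ^ N),
        Polynomial.C (a ⟨ptm b n, Nat.mod_lt _ (by omega)⟩) * Polynomial.X ^ (n : ℕ)) =
      (∑ n : Fin (b ^ N), Polynomial.C (c n) * Polynomial.X ^ (n : ℕ)) *
        ∏ m ∈ Finset.range N, (1 - Polynomial.X ^ b ^ m)) ↔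
    ((Mmat b N).mulVec c = fun n : Fin (b ^ N) => a ⟨ptm b (n : ℕ), Nat.mod_lt _ (by omega)⟩) ∧
      ∀ n : Fin (b ^ N), (∃ i, dig b n i = b - 1) → c n = 0 := by
  obtain ⟨c₀, hc₀, hMc₀⟩ := exists_vanishesOnMaxDigit_Mmat_mulVec_eq_ptmVec hb N a ha
  simp only [← ofFn_eq_sum_C_mul_X_pow]
  change ofFn _ (ptmVec (by omega) a N) = _ ↔ _ = ptmVec (by omega) a N ∧ VanishesOnMaxDigit b c
  constructor
  · intro h
    have hpoly : ofFn _ c * _ = ofFn _ c₀ * _ := h.symm.trans (hMc₀ ▸ ofFn_Mmat_mulVec hc₀)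
    obtain rfl := injective_ofFn _
      (mul_right_cancel₀ (prod_one_sub_X_pow_pow_ne_zero (by omega) N) hpoly)
    exact ⟨hMc₀, hc₀⟩
  · rintro ⟨hMc, hc⟩
    rw [← hMc, ofFn_Mmat_mulVec hc]
end
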